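/- arXiv:1206.6039 — 5 statements merged into one kernel-verified Lean document; each statement's English description precedes it below -/
import Mathlib

section
/- The dilation function K is differentiable at every P ∈ S⁺, and its Fréchet derivative at P is the linear map Q ↦ tr(K_P(P)ᵀ·Q), where K_P(P) = 2·P·(PᵀP)⁻¹·S(PᵀP)/det(PᵀP)^{1/n}. Equivalently, the gradient of K at P with respect to the Frobenius inner product equals 2·P·(PᵀP)⁻¹·S(PᵀP)/det(PᵀP)^{1/n}. -/
open Matrix

attribute [local instance] Matrix.frobeniusNormedAddCommGroup Matrix.frobeniusNormedSpace

/-- The dilation function `K(P) = |P|² / det(PᵀP)^(1/n)`, where `|P|² = tr(PᵀP)`. -/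
noncomputable def dil {N n : ℕ} (P : Matrix (Fin N) (Fin n) ℝ) : ℝ :=
  (Pᵀ * P).trace / (Pᵀ * P).det ^ ((1 : ℝ) / n)

/-- The Ahlfors operator `S(A) = (A + Aᵀ)/2 − (tr(A)/n)·I`. -/
noncomputable def ahl {n : ℕ} (A : Matrix (Fin n) (Fin n) ℝ) : Matrix (Fin n) (Fin n) ℝ :=
  (2⁻¹ : ℝ) • (A + Aᵀ) - (A.trace / (n : ℝ)) • 1

/-- The gradient `K_P(P) = 2·P·(PᵀP)⁻¹·S(PᵀP)/det(PᵀP)^(1/n)` of the dilation with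
respect to the Frobenius inner product. -/
noncomputable def dilGrad {N n : ℕ} (P : Matrix (Fin N) (Fin n) ℝ) : Matrix (Fin N) (Fin n) ℝ :=
  (2 / (Pᵀ * P).det ^ ((1 : ℝ) / n)) • (P * (Pᵀ * P)⁻¹ * ahl (Pᵀ * P))

/-!
Write `A = PᵀP`, so that `K(P) = tr A / (det A)^(1/n)`. By Jacobi's formula the derivative of
`det` at `A` is `H ↦ tr(adj A · H)`, and the Gram map `P ↦ PᵀP` has derivative
`Q ↦ PᵀQ + QᵀP`. Pairing the latter with a symmetric matrix `B` (here `B = 1` and `B = adj A`)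
gives `2 tr(B Pᵀ Q)`. The quotient rule, `adj A = det A · A⁻¹`, and the identity
`P A⁻¹ S(A) = P − (tr A / n) P A⁻¹` (valid as `A` is symmetric) then assemble the gradient.
-/

namespace Matrix

theorem sum_det_updateRow_eq_trace_adjugate_mul {R ι : Type*} [CommRing R] [Fintype ι]
    [DecidableEq ι] (A Q : Matrix ι ι R) :
    ∑ i, (A.updateRow i (Q i)).det = (A.adjugate * Q).trace := by
  have hrow : ∀ i, (A.updateRow i (Q i)).det = ∑ j, A.adjugate j i * Q i j := fun i => by
    rw [← cramer_transpose_apply, cramer_eq_adjugate_mulVec, ← adjugate_transpose]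
    rfl
  simp_rw [hrow, trace, diag, mul_apply]
  exact Finset.sum_comm

section Calculus

variable {𝕜 : Type*} [NontriviallyNormedField 𝕜] [CompleteSpace 𝕜]

noncomputable def traceMulCLM {m n : Type*} [Fintype m] [Fintype n] (B : Matrix n m 𝕜) :
    Matrix m n 𝕜 →L[𝕜] 𝕜 :=
  LinearMap.toContinuousLinearMap
    { toFun := fun Q => (B * Q).trace
      map_add' := fun Q R => by rw [Matrix.mul_add, trace_add]
      map_smul' := fun c Q => by rw [Matrix.mul_smul, trace_smul]; rfl }

@[simp]
theorem traceMulCLM_apply {m n : Type*} [Fintype m] [Fintype n] (B : Matrix n m 𝕜)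
    (Q : Matrix m n 𝕜) : traceMulCLM B Q = (B * Q).trace :=
  rfl

variable {ι : Type*} [Fintype ι] [DecidableEq ι]

noncomputable def detRowContinuousMultilinear :
    ContinuousMultilinearMap 𝕜 (fun _ : ι => ι → 𝕜) 𝕜 :=
  ⟨detRowAlternating.toMultilinearMap, continuous_id.matrix_det⟩

theorem hasFDerivAt_det (A : Matrix ι ι 𝕜) : HasFDerivAt det (traceMulCLM A.adjugate) A := by
  let rows : Matrix ι ι 𝕜 →L[𝕜] (ι → ι → 𝕜) :=
    (ofLinearEquiv 𝕜).symm.toLinearMap.toContinuousLinearMap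
  refine ((detRowContinuousMultilinear.hasFDerivAt (rows A)).comp A
    rows.hasFDerivAt).congr_fderiv ?_
  ext Q
  exact (detRowContinuousMultilinear.linearDeriv_apply (rows A) (rows Q)).trans
    (sum_det_updateRow_eq_trace_adjugate_mul A Q)

end Calculus

section Gram

variable {𝕜 : Type*} [RCLike 𝕜] {m n : Type*} [Fintype m] [Fintype n]

theorem isBoundedBilinearMap_mul {l : Type*} [Fintype l] :
    IsBoundedBilinearMap 𝕜 (fun p : Matrix l m 𝕜 × Matrix m n 𝕜 => p.1 * p.2) where
  add_left := Matrix.add_mul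
  smul_left := Matrix.smul_mul
  add_right := Matrix.mul_add
  smul_right c A B := Matrix.mul_smul A c B
  bound := ⟨1, one_pos, fun A B => by simpa using frobenius_norm_mul A B⟩

theorem _root_.HasFDerivAt.comp_transpose_mul_self {f : Matrix n n 𝕜 → 𝕜} {B : Matrix n n 𝕜}
    {P : Matrix m n 𝕜} (hB : Bᵀ = B) (hf : HasFDerivAt f (traceMulCLM B) (Pᵀ * P)) :
    HasFDerivAt (fun P : Matrix m n 𝕜 => f (Pᵀ * P)) ((2 : 𝕜) • traceMulCLM (B * Pᵀ)) P := by
  let transposeCLM : Matrix m n 𝕜 →L[𝕜] Matrix n m 𝕜 :=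
    (transposeLinearEquiv m n 𝕜 𝕜).toLinearMap.toContinuousLinearMap
  have hpair : HasFDerivAt (fun P : Matrix m n 𝕜 => (Pᵀ, P))
      (transposeCLM.prod (.id 𝕜 _)) P :=
    transposeCLM.hasFDerivAt.prodMk (hasFDerivAt_id P)
  have hgram : HasFDerivAt (fun P : Matrix m n 𝕜 => Pᵀ * P) _ P :=
    HasFDerivAt.comp (f := fun P : Matrix m n 𝕜 => (Pᵀ, P))
      (g := fun p : Matrix n m 𝕜 × Matrix m n 𝕜 => p.1 * p.2) P
      (isBoundedBilinearMap_mul.hasFDerivAt (Pᵀ, P)) hpair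
  refine (HasFDerivAt.comp (f := fun P : Matrix m n 𝕜 => Pᵀ * P) P hf hgram).congr_fderiv ?_
  ext Q
  change (B * (Pᵀ * Q + Qᵀ * P)).trace = (2 : 𝕜) * (B * Pᵀ * Q).trace
  have hswap : (B * (Qᵀ * P)).trace = (B * (Pᵀ * Q)).trace := by
    rw [← trace_transpose, transpose_mul, transpose_mul, transpose_transpose, hB, trace_mul_comm]
  rw [Matrix.mul_add, trace_add, hswap, Matrix.mul_assoc]
  ring

variable [DecidableEq n]

theorem hasFDerivAt_trace_transpose_mul_self (P : Matrix m n 𝕜) :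
    HasFDerivAt (fun P : Matrix m n 𝕜 => (Pᵀ * P).trace) ((2 : 𝕜) • traceMulCLM Pᵀ) P := by
  simpa only [traceMulCLM_apply, Matrix.one_mul] using
    ((traceMulCLM (1 : Matrix n n 𝕜)).hasFDerivAt (x := Pᵀ * P)).comp_transpose_mul_self
      transpose_one

theorem hasFDerivAt_det_transpose_mul_self (P : Matrix m n 𝕜) :
    HasFDerivAt (fun P : Matrix m n 𝕜 => (Pᵀ * P).det)
      ((2 : 𝕜) • traceMulCLM ((Pᵀ * P).adjugate * Pᵀ)) P :=
  (hasFDerivAt_det _).comp_transpose_mul_self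
    (by rw [adjugate_transpose, transpose_mul, transpose_transpose])

end Gram

end Matrix

theorem ahl_of_transpose_eq {n : ℕ} {A : Matrix (Fin n) (Fin n) ℝ} (hA : Aᵀ = A) :
    ahl A = A - (A.trace / n) • 1 := by
  rw [ahl, hA, ← two_smul ℝ A, smul_smul, inv_mul_cancel₀ two_ne_zero, one_smul]

theorem dilGrad_transpose {N n : ℕ} (P : Matrix (Fin N) (Fin n) ℝ)
    (hP : IsUnit (Pᵀ * P).det) :
    (dilGrad P)ᵀ = (2 / (Pᵀ * P).det ^ ((1 : ℝ) / n)) •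
      (Pᵀ - ((Pᵀ * P).trace / n) • ((Pᵀ * P)⁻¹ * Pᵀ)) := by
  have hsymm : (Pᵀ * P)ᵀ = Pᵀ * P := by rw [transpose_mul, transpose_transpose]
  rw [dilGrad, ahl_of_transpose_eq hsymm, Matrix.mul_sub, Matrix.mul_assoc,
    nonsing_inv_mul _ hP, Matrix.mul_one, Matrix.mul_smul, Matrix.mul_one, transpose_smul,
    transpose_sub, transpose_smul, transpose_mul, transpose_nonsing_inv, hsymm]

theorem dil_hasFDerivAt_general (n N : ℕ)
    (P : Matrix (Fin N) (Fin n) ℝ) (hP : 0 < (Pᵀ * P).det) :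
    ∃ L : Matrix (Fin N) (Fin n) ℝ →L[ℝ] ℝ,
      HasFDerivAt dil L P ∧ ∀ Q : Matrix (Fin N) (Fin n) ℝ, L Q = ((dilGrad P)ᵀ * Q).trace := by
  refine ⟨traceMulCLM (dilGrad P)ᵀ, ?_, fun Q => rfl⟩
  set A := Pᵀ * P with hA
  have hroot : 0 < A.det ^ ((1 : ℝ) / n) := Real.rpow_pos_of_pos hP _
  have hquot := (hasFDerivAt_trace_transpose_mul_self P).mul
    ((hasDerivAt_inv hroot.ne').comp_hasFDerivAt P
      ((hasFDerivAt_det_transpose_mul_self P).rpow_const (Or.inl hP.ne')))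
  refine hquot.congr_fderiv ?_
  ext Q
  -- `rw`/`simp` cannot unfold these maps: `traceMulCLM` carries the product topology on
  -- matrices, which agrees with the Frobenius one only up to unfolding.
  change A.trace * (-((A.det ^ ((1 : ℝ) / n)) ^ 2)⁻¹ * ((1 / n * A.det ^ ((1 : ℝ) / n - 1)) *
      (2 * (A.adjugate * Pᵀ * Q).trace))) + (A.det ^ ((1 : ℝ) / n))⁻¹ * (2 * (Pᵀ * Q).trace) =
    ((dilGrad P)ᵀ * Q).trace
  rw [dilGrad_transpose P (isUnit_iff_ne_zero.mpr hP.ne'), inv_def,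
    Ring.inverse_eq_inv', Real.rpow_sub_one hP.ne']
  simp only [smul_eq_mul, Matrix.smul_mul, Matrix.sub_mul, trace_smul, trace_sub,
    Matrix.mul_assoc, ← hA]
  field_simp
  ring

/-- the dilation `K` is (Fréchet) differentiable at every `P ∈ S⁺`, with
derivative the linear map `Q ↦ tr(K_P(P)ᵀ·Q)`; i.e. the gradient of `K` at `P` with respect
to the Frobenius inner product is `K_P(P) = 2·P·(PᵀP)⁻¹·S(PᵀP)/det(PᵀP)^(1/n)`. -/
theorem dil_hasFDerivAt (n N : ℕ) (hn : 1 ≤ n) (hnN : n ≤ N)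
    (P : Matrix (Fin N) (Fin n) ℝ) (hP : 0 < (Pᵀ * P).det) :
    ∃ L : Matrix (Fin N) (Fin n) ℝ →L[ℝ] ℝ,
      HasFDerivAt dil L P ∧ ∀ Q : Matrix (Fin N) (Fin n) ℝ, L Q = ((dilGrad P)ᵀ * Q).trace :=
  dil_hasFDerivAt_general n N P hP
end

section
/- The map K_P : S⁺ → ℝ^{N×n}, K_P(P) = 2·P·(PᵀP)⁻¹·S(PᵀP)/det(PᵀP)^{1/n}, is differentiable at every P ∈ S⁺; denote by DK_P(P)[Q] its derivative at P in the direction Q ∈ ℝ^{N×n}. Then for every w ∈ ℝ^N with K_P(P)ᵀw = 0 and every Q ∈ ℝ^{N×n}, one has the identity (DK_P(P)[Q])ᵀ·w = (2/det(PᵀP)^{1/n})·[ (I − (|P|²/n)·(PᵀP)⁻¹)·Qᵀw + (PᵀP)⁻¹·S(QᵀP + PᵀQ)·Pᵀw ] in ℝⁿ. -/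
/-!
Write `K_P = s • M` with `s X = 2 / det(XᵀX)^(1/n)` and `M X = X (XᵀX)⁻¹ S(XᵀX)`. By the product
rule `DK_P(P)[Q] = s P • DM(P)[Q] + Ds(P)[Q] • M P`, and `w` kills the second term because
`K_P(P)ᵀ w = 0` and `s P ≠ 0`; so the derivative of the determinant factor is never needed.
For the symmetric matrix `G = PᵀP` one has `S(G) G⁻¹ = 1 - (tr G / n) G⁻¹`, so normality of `w`
says that `v = Pᵀw` satisfies `v = (tr G / n) G⁻¹ v`. Expanding `DM(P)[Q]ᵀ w` with
`d(G⁻¹) = -G⁻¹ dG G⁻¹` and substituting this relation once gives the identity.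
-/

open Matrix

attribute [local instance] Matrix.frobeniusNormedAddCommGroup Matrix.frobeniusNormedSpace

attribute [local instance] Matrix.frobeniusNormedRing Matrix.frobeniusNormedAlgebra

namespace Matrix

variable {l m n : Type*} [Fintype l] [Fintype m] [Fintype n]

noncomputable def mulCLM : Matrix l m ℝ →L[ℝ] Matrix m n ℝ →L[ℝ] Matrix l n ℝ :=
  LinearMap.toContinuousLinearMap (LinearMap.toContinuousLinearMap.toLinearMap ∘ₗ mulLinearMap ℝ)

noncomputable def transposeCLM : Matrix m n ℝ →L[ℝ] Matrix n m ℝ :=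
  LinearMap.toContinuousLinearMap (transposeLinearEquiv m n ℝ ℝ).toLinearMap

lemma differentiable_entry (i : m) (j : n) : Differentiable ℝ fun A : Matrix m n ℝ => A i j :=
  (LinearMap.toContinuousLinearMap (entryLinearMap ℝ ℝ i j)).differentiable

lemma differentiable_det [DecidableEq n] : Differentiable ℝ (det : Matrix n n ℝ → ℝ) := by
  rw [show (det : Matrix n n ℝ → ℝ) =
      fun A => ∑ σ : Equiv.Perm n, (Equiv.Perm.sign σ : ℝ) * ∏ i, A (σ i) i from funext det_apply']
  refine Differentiable.fun_sum fun σ _ A => DifferentiableAt.const_mul ?_ _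
  exact (HasFDerivAt.finsetProd fun i _ =>
    (differentiable_entry (σ i) i A).hasFDerivAt).differentiableAt

end Matrix

lemma Matrix.isSymm_transpose_mul_self' {α m n : Type*} [CommSemiring α] [Fintype m]
    (A : Matrix m n α) : (Aᵀ * A).IsSymm := by
  rw [IsSymm, transpose_mul, transpose_transpose]

noncomputable def ahlCLM (n : ℕ) : Matrix (Fin n) (Fin n) ℝ →L[ℝ] Matrix (Fin n) (Fin n) ℝ :=
  LinearMap.toContinuousLinearMap
    { toFun := ahl
      map_add' := fun A B => by
        simp only [ahl, transpose_add, trace_add, add_div, add_smul]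
        module
      map_smul' := fun c A => by
        simp only [ahl, transpose_smul, trace_smul, smul_eq_mul, mul_div_assoc, RingHom.id_apply]
        module }

section Calculus

variable {l m n : Type*} [Fintype l] [Fintype m] [Fintype n]
  {E : Type*} [NormedAddCommGroup E] [NormedSpace ℝ E] {x : E}

theorem HasFDerivAt.matrix_mul {A : E → Matrix l m ℝ} {B : E → Matrix m n ℝ}
    {A' : E →L[ℝ] Matrix l m ℝ} {B' : E →L[ℝ] Matrix m n ℝ}
    (hA : HasFDerivAt A A' x) (hB : HasFDerivAt B B' x) :
    HasFDerivAt (fun y => A y * B y)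
      (mulCLM.precompR E (A x) B' + mulCLM.precompL E A' (B x)) x :=
  mulCLM.hasFDerivAt_of_bilinear hA hB

theorem HasFDerivAt.matrix_transpose {A : E → Matrix m n ℝ} {A' : E →L[ℝ] Matrix m n ℝ}
    (hA : HasFDerivAt A A' x) : HasFDerivAt (fun y => (A y)ᵀ) (transposeCLM.comp A') x :=
  transposeCLM.hasFDerivAt.comp x hA (g := transposeCLM)

theorem HasFDerivAt.matrix_inv [DecidableEq n] {A : E → Matrix n n ℝ}
    {A' : E →L[ℝ] Matrix n n ℝ} (hA : HasFDerivAt A A' x) (hdet : IsUnit (A x).det) :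
    HasFDerivAt (fun y => (A y)⁻¹)
      ((-ContinuousLinearMap.mulLeftRight ℝ _ (A x)⁻¹ (A x)⁻¹).comp A') x := by
  have hunit : IsUnit (A x) := (isUnit_iff_isUnit_det _).2 hdet
  have h := (hasFDerivAt_ringInverse (𝕜 := ℝ) hunit.unit).comp x hA
  rw [coe_units_inv, hunit.unit_spec] at h
  simpa only [Function.comp_def, ← nonsing_inv_eq_ringInverse] using h

theorem HasFDerivAt.ahl {k : ℕ} {A : E → Matrix (Fin k) (Fin k) ℝ}
    {A' : E →L[ℝ] Matrix (Fin k) (Fin k) ℝ} (hA : HasFDerivAt A A' x) :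
    HasFDerivAt (fun y => _root_.ahl (A y)) ((ahlCLM k).comp A') x :=
  (ahlCLM k).hasFDerivAt.comp x hA (g := ahlCLM k)

end Calculus

section TransposeMulSelf

variable {m : Type*} [Fintype m]

lemma differentiableAt_div_det_transpose_mul_self_rpow {n : Type*} [Fintype n] [DecidableEq n]
    {P : Matrix m n ℝ} (hP : 0 < (Pᵀ * P).det) (c r : ℝ) :
    DifferentiableAt ℝ (fun X : Matrix m n ℝ => c / (Xᵀ * X).det ^ r) P := by
  have hdet : DifferentiableAt ℝ (fun X : Matrix m n ℝ => (Xᵀ * X).det) P :=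
    differentiable_det.differentiableAt.comp P
      ((hasFDerivAt_id P).matrix_transpose.matrix_mul (hasFDerivAt_id P)).differentiableAt
  have hpow : (Pᵀ * P).det ^ r ≠ 0 := (Real.rpow_pos_of_pos hP r).ne'
  fun_prop (disch := first | exact hpow | exact Or.inl hP.ne')

variable {n : ℕ}

theorem exists_hasFDerivAt_mul_inv_transpose_mul_self_mul_ahl (P : Matrix m (Fin n) ℝ)
    (hP : IsUnit (Pᵀ * P).det) :
    ∃ M' : Matrix m (Fin n) ℝ →L[ℝ] Matrix m (Fin n) ℝ,
      HasFDerivAt (fun X => X * (Xᵀ * X)⁻¹ * ahl (Xᵀ * X)) M' P ∧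
      ∀ Q, M' Q = P * (Pᵀ * P)⁻¹ * ahl (Pᵀ * Q + Qᵀ * P) +
        (Q * (Pᵀ * P)⁻¹ - P * ((Pᵀ * P)⁻¹ * (Pᵀ * Q + Qᵀ * P) * (Pᵀ * P)⁻¹)) * ahl (Pᵀ * P) := by
  have hG := (hasFDerivAt_id P).matrix_transpose.matrix_mul (hasFDerivAt_id P)
  refine ⟨_, ((hasFDerivAt_id P).matrix_mul (hG.matrix_inv hP)).matrix_mul hG.ahl, fun Q => ?_⟩
  rw [sub_eq_neg_add, ← Matrix.mul_neg]
  rfl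

lemma ahl_transpose (A : Matrix (Fin n) (Fin n) ℝ) : (ahl A)ᵀ = ahl A := by
  simp only [ahl, transpose_sub, transpose_smul, transpose_add, transpose_transpose,
    transpose_one, add_comm]

lemma Matrix.IsSymm.ahl_eq {A : Matrix (Fin n) (Fin n) ℝ} (hA : A.IsSymm) :
    ahl A = A - (A.trace / n) • 1 := by
  rw [ahl, hA.eq, ← two_smul ℝ A, smul_smul, inv_mul_cancel₀ two_ne_zero, one_smul]

lemma Matrix.IsSymm.ahl_mul_inv {A : Matrix (Fin n) (Fin n) ℝ} (hA : A.IsSymm)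
    (hdet : IsUnit A.det) : ahl A * A⁻¹ = 1 - (A.trace / n) • A⁻¹ := by
  rw [hA.ahl_eq, Matrix.sub_mul, mul_nonsing_inv _ hdet, Matrix.smul_mul, Matrix.one_mul]

lemma smul_inv_mulVec_eq_of_transpose_mulVec_eq_zero {P : Matrix m (Fin n) ℝ}
    (hP : IsUnit (Pᵀ * P).det) {w : m → ℝ} (hw : (P * (Pᵀ * P)⁻¹ * ahl (Pᵀ * P))ᵀ *ᵥ w = 0) :
    ((Pᵀ * P).trace / n) • ((Pᵀ * P)⁻¹ *ᵥ (Pᵀ *ᵥ w)) = Pᵀ *ᵥ w := by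
  have hG := isSymm_transpose_mul_self' P
  rw [transpose_mul, transpose_mul, ahl_transpose, hG.inv.eq, ← Matrix.mul_assoc,
    hG.ahl_mul_inv hP, Matrix.sub_mul, Matrix.one_mul, Matrix.smul_mul, sub_mulVec, smul_mulVec,
    ← mulVec_mulVec, sub_eq_zero] at hw
  exact hw.symm

theorem transpose_mulVec_eq_of_transpose_mulVec_eq_zero {P : Matrix m (Fin n) ℝ}
    (hP : IsUnit (Pᵀ * P).det) {w : m → ℝ} (hw : (P * (Pᵀ * P)⁻¹ * ahl (Pᵀ * P))ᵀ *ᵥ w = 0)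
    (Q : Matrix m (Fin n) ℝ) :
    (P * (Pᵀ * P)⁻¹ * ahl (Pᵀ * Q + Qᵀ * P) +
        (Q * (Pᵀ * P)⁻¹ - P * ((Pᵀ * P)⁻¹ * (Pᵀ * Q + Qᵀ * P) * (Pᵀ * P)⁻¹)) * ahl (Pᵀ * P))ᵀ *ᵥ w
      = (1 - ((Pᵀ * P).trace / n) • (Pᵀ * P)⁻¹) *ᵥ (Qᵀ *ᵥ w) +
        ((Pᵀ * P)⁻¹ * ahl (Qᵀ * P + Pᵀ * Q)) *ᵥ (Pᵀ *ᵥ w) := by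
  have hv := smul_inv_mulVec_eq_of_transpose_mulVec_eq_zero hP hw
  have hG := isSymm_transpose_mul_self' P
  rw [add_comm (Qᵀ * P)]
  set G := Pᵀ * P
  set G' := Pᵀ * Q + Qᵀ * P
  have hG' : G'.IsSymm := by
    simp only [G', IsSymm, transpose_add, transpose_mul, transpose_transpose, add_comm]
  set c := G.trace / n
  set v := Pᵀ *ᵥ w
  have hS : ∀ u, ahl G *ᵥ (G⁻¹ *ᵥ u) = u - c • (G⁻¹ *ᵥ u) := fun u => by
    rw [mulVec_mulVec, hG.ahl_mul_inv hP, sub_mulVec, one_mulVec, smul_mulVec]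
  have hkey : c • (G⁻¹ *ᵥ (G' *ᵥ (G⁻¹ *ᵥ v))) = G⁻¹ *ᵥ (G' *ᵥ v) := by
    rw [← mulVec_smul, ← mulVec_smul, hv]
  simp only [transpose_add, transpose_sub, transpose_mul, ahl_transpose, hG.inv.eq, hG'.eq]
  simp only [add_mulVec, Matrix.mul_sub, sub_mulVec, ← mulVec_mulVec, ← Matrix.mul_assoc, hS,
    hG'.ahl_eq, one_mulVec, smul_mulVec, mulVec_smul]
  linear_combination (norm := module) hkey

end TransposeMulSelf

theorem dilGrad_hasFDerivAt_normal_identity_general (n N : ℕ)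
    (P : Matrix (Fin N) (Fin n) ℝ) (hP : 0 < (Pᵀ * P).det) :
    ∃ L : Matrix (Fin N) (Fin n) ℝ →L[ℝ] Matrix (Fin N) (Fin n) ℝ,
      HasFDerivAt dilGrad L P ∧
      ∀ w : Fin N → ℝ, (dilGrad P)ᵀ.mulVec w = 0 →
      ∀ Q : Matrix (Fin N) (Fin n) ℝ,
        (L Q)ᵀ.mulVec w =
          (2 / (Pᵀ * P).det ^ ((1 : ℝ) / n)) •
            ((1 - ((Pᵀ * P).trace / (n : ℝ)) • (Pᵀ * P)⁻¹).mulVec (Qᵀ.mulVec w)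
              + ((Pᵀ * P)⁻¹ * ahl (Qᵀ * P + Pᵀ * Q)).mulVec (Pᵀ.mulVec w)) := by
  have hG : IsUnit (Pᵀ * P).det := hP.ne'.isUnit
  set s := fun X : Matrix (Fin N) (Fin n) ℝ => 2 / (Xᵀ * X).det ^ ((1 : ℝ) / n)
  have hs : DifferentiableAt ℝ s P := differentiableAt_div_det_transpose_mul_self_rpow hP 2 _
  obtain ⟨M', hM, hM'⟩ := exists_hasFDerivAt_mul_inv_transpose_mul_self_mul_ahl P hG
  obtain ⟨L, hL, hLQ⟩ : ∃ L : Matrix (Fin N) (Fin n) ℝ →L[ℝ] Matrix (Fin N) (Fin n) ℝ,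
      HasFDerivAt dilGrad L P ∧
        ∀ Q, L Q = s P • M' Q + fderiv ℝ s P Q • (P * (Pᵀ * P)⁻¹ * ahl (Pᵀ * P)) :=
    ⟨_, hs.hasFDerivAt.smul hM, fun Q => rfl⟩
  refine ⟨L, hL, fun w hw Q => ?_⟩
  have hMw : (P * (Pᵀ * P)⁻¹ * ahl (Pᵀ * P))ᵀ *ᵥ w = 0 := by
    rw [dilGrad, transpose_smul, smul_mulVec] at hw
    exact (smul_eq_zero.1 hw).resolve_left (by positivity)
  rw [hLQ, transpose_add, add_mulVec, transpose_smul, transpose_smul, smul_mulVec, smul_mulVec,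
    hMw, smul_zero, add_zero, hM', transpose_mulVec_eq_of_transpose_mulVec_eq_zero hG hMw]

/-- the map `K_P : S⁺ → ℝ^{N×n}` is differentiable at every `P ∈ S⁺`, and
its derivative `DK_P(P)[Q]` satisfies, for every `w ∈ ℝ^N` with `K_P(P)ᵀw = 0` and
every direction `Q`:
`(DK_P(P)[Q])ᵀ·w = (2/det(PᵀP)^(1/n))·[ (I − (|P|²/n)(PᵀP)⁻¹)·Qᵀw + (PᵀP)⁻¹·S(QᵀP+PᵀQ)·Pᵀw ]`. -/
theorem dilGrad_hasFDerivAt_normal_identity (n N : ℕ) (hn : 1 ≤ n) (hnN : n ≤ N)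
    (P : Matrix (Fin N) (Fin n) ℝ) (hP : 0 < (Pᵀ * P).det) :
    ∃ L : Matrix (Fin N) (Fin n) ℝ →L[ℝ] Matrix (Fin N) (Fin n) ℝ,
      HasFDerivAt dilGrad L P ∧
      ∀ w : Fin N → ℝ, (dilGrad P)ᵀ.mulVec w = 0 →
      ∀ Q : Matrix (Fin N) (Fin n) ℝ,
        (L Q)ᵀ.mulVec w =
          (2 / (Pᵀ * P).det ^ ((1 : ℝ) / n)) •
            ((1 - ((Pᵀ * P).trace / (n : ℝ)) • (Pᵀ * P)⁻¹).mulVec (Qᵀ.mulVec w)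
              + ((Pᵀ * P)⁻¹ * ahl (Qᵀ * P + Pᵀ * Q)).mulVec (Pᵀ.mulVec w)) :=
  dilGrad_hasFDerivAt_normal_identity_general n N P hP
end

section
/- Let n = N and let P be an invertible real n×n matrix. Then K_P(P) = −(2·K(P)/n)·( P^{−ᵀ} − n·P/|P|² ), where P^{−ᵀ} denotes the inverse transpose of P. -/
open Matrix

/-! Since `PᵀP` is symmetric, `S(PᵀP) = PᵀP − (|P|²/n)·I`, and `P (PᵀP)⁻¹ = P^{−ᵀ}`; hence
`K_P(P) = 2 (P − (|P|²/n) P^{−ᵀ}) / det(PᵀP)^{1/n}`. Factoring out `−2K(P)/n` divides by `|P|²`,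
which is positive because `P ≠ 0`. -/

theorem Matrix.trace_transpose_mul_self_pos {m n : Type*} [Fintype m] [Fintype n]
    {P : Matrix m n ℝ} (hP : P ≠ 0) : 0 < (Pᵀ * P).trace := by
  have hnonneg := (posSemidef_conjTranspose_mul_self P).trace_nonneg
  have hne := trace_conjTranspose_mul_self_eq_zero_iff.not.mpr hP
  rw [conjTranspose_eq_transpose_of_trivial] at hnonneg hne
  exact hnonneg.lt_of_ne' hne

theorem Matrix.mul_inv_transpose_mul_self {m R : Type*} [Fintype m] [DecidableEq m] [CommRing R]
    {P : Matrix m m R} (hP : IsUnit P.det) : P * (Pᵀ * P)⁻¹ = P⁻¹ᵀ := by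
  rw [mul_inv_rev, ← Matrix.mul_assoc, mul_nonsing_inv _ hP, Matrix.one_mul,
    transpose_nonsing_inv]

theorem ahl_eq_sub_of_isSymm {n : ℕ} {A : Matrix (Fin n) (Fin n) ℝ} (hA : A.IsSymm) :
    ahl A = A - (A.trace / n) • 1 := by
  rw [ahl, hA.eq, ← two_smul ℝ A, smul_smul, inv_mul_cancel₀ two_ne_zero, one_smul]

theorem mul_inv_transpose_mul_self_mul_ahl {n : ℕ} {P : Matrix (Fin n) (Fin n) ℝ}
    (hP : IsUnit P.det) :
    P * (Pᵀ * P)⁻¹ * ahl (Pᵀ * P) = P - ((Pᵀ * P).trace / n) • P⁻¹ᵀ := by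
  rw [ahl_eq_sub_of_isSymm (isSymm_transpose_mul_self P), Matrix.mul_sub, Matrix.mul_smul,
    Matrix.mul_one, mul_inv_transpose_mul_self hP, ← Matrix.mul_assoc, ← transpose_mul,
    mul_nonsing_inv _ hP, transpose_one, Matrix.one_mul]

/-- for `n = N` and `P` an invertible real `n×n` matrix,
`K_P(P) = −(2·K(P)/n)·( P^{−ᵀ} − n·P/|P|² )`. -/
theorem dilGrad_eq_of_invertible (n : ℕ) (hn : 1 ≤ n)
    (P : Matrix (Fin n) (Fin n) ℝ) (hP : IsUnit P.det) :
    dilGrad P =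
      (-(2 * dil P / (n : ℝ))) • ((P⁻¹)ᵀ - ((n : ℝ) / (Pᵀ * P).trace) • P) := by
  have : NeZero n := ⟨by omega⟩
  have hn_ne : (n : ℝ) ≠ 0 := by positivity
  have htrace_ne : (Pᵀ * P).trace ≠ 0 :=
    (trace_transpose_mul_self_pos ((isUnit_iff_isUnit_det P).mpr hP).ne_zero).ne'
  rw [dilGrad, mul_inv_transpose_mul_self_mul_ahl hP, dil]
  match_scalars <;> field_simp
end

section
/- Let Ω ⊆ ℝⁿ be open and u : Ω → ℝ^N a C² immersion, with g = DuᵀDu. Then u solves the tangential system K_P(Du(x))·∇(K∘Du)(x) = 0 for all x ∈ Ω if and only if S(g(x))·∇(K∘Du)(x) = 0 for all x ∈ Ω; here K∘Du = tr(G) where G = g/det(g)^{1/n} is the distortion tensor. -/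
open Matrix

/-- The Jacobian matrix `Du(x) ∈ ℝ^{N×n}` of a map `u : ℝⁿ → ℝ^N`. -/
noncomputable def jac {n N : ℕ} (u : EuclideanSpace ℝ (Fin n) → (Fin N → ℝ))
    (x : EuclideanSpace ℝ (Fin n)) : Matrix (Fin N) (Fin n) ℝ :=
  Matrix.of fun α i => fderiv ℝ u x (EuclideanSpace.single i 1) α

/-- The gradient of a scalar function on `ℝⁿ`. -/
noncomputable def egrad {n : ℕ} (f : EuclideanSpace ℝ (Fin n) → ℝ)
    (x : EuclideanSpace ℝ (Fin n)) : Fin n → ℝ :=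
  fun i => fderiv ℝ f x (EuclideanSpace.single i 1)


lemma dilGrad_mulVec_eq_zero_iff {N n : ℕ} (P : Matrix (Fin N) (Fin n) ℝ)
    (h : 0 < (Pᵀ * P).det) (v : Fin n → ℝ) :
    (dilGrad P).mulVec v = 0 ↔ (ahl (Pᵀ * P)).mulVec v = 0 := by
  have hc : 0 < 2 / (Pᵀ * P).det ^ ((1 : ℝ) / n) := by
    positivity
  have hinv : (Pᵀ * P) * (Pᵀ * P)⁻¹ = 1 := Matrix.mul_nonsing_inv _ (isUnit_iff_ne_zero.mpr h.ne')
  constructor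
  · intro h0
    have hM : (P * (Pᵀ * P)⁻¹ * ahl (Pᵀ * P)).mulVec v = 0 := by
      rw [dilGrad, Matrix.smul_mulVec] at h0
      rcases smul_eq_zero.mp h0 with hc0 | hv0
      · exact absurd hc0 hc.ne'
      · exact hv0
    have e : Pᵀ * (P * (Pᵀ * P)⁻¹ * ahl (Pᵀ * P)) = ahl (Pᵀ * P) := by
      rw [← Matrix.mul_assoc, ← Matrix.mul_assoc, hinv, Matrix.one_mul]
    calc (ahl (Pᵀ * P)).mulVec v
        = Pᵀ.mulVec ((P * (Pᵀ * P)⁻¹ * ahl (Pᵀ * P)).mulVec v) := by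
          rw [Matrix.mulVec_mulVec, e]
      _ = 0 := by rw [hM, Matrix.mulVec_zero]
  · intro h0
    rw [dilGrad, Matrix.smul_mulVec, ← Matrix.mulVec_mulVec, h0,
      Matrix.mulVec_zero, smul_zero]

/-- a `C²` immersion `u` solves the tangential system
`K_P(Du(x))·∇(K∘Du)(x) = 0` on `Ω` if and only if `S(g(x))·∇(K∘Du)(x) = 0` on `Ω`,
where `g = DuᵀDu`. -/
theorem tangential_iff_ahlfors (n N : ℕ)
    (Ω : Set (EuclideanSpace ℝ (Fin n))) (hΩ : IsOpen Ω)
    (u : EuclideanSpace ℝ (Fin n) → (Fin N → ℝ))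
    (hu : ContDiffOn ℝ 2 u Ω)
    (himm : ∀ x ∈ Ω, 0 < ((jac u x)ᵀ * jac u x).det) :
    (∀ x ∈ Ω, (dilGrad (jac u x)).mulVec (egrad (fun y => dil (jac u y)) x) = 0)
      ↔ (∀ x ∈ Ω,
          (ahl ((jac u x)ᵀ * jac u x)).mulVec (egrad (fun y => dil (jac u y)) x) = 0) := by
  constructor
  · intro H x hx
    exact (dilGrad_mulVec_eq_zero_iff _ (himm x hx) _).mp (H x hx)
  · intro H x hx
    exact (dilGrad_mulVec_eq_zero_iff _ (himm x hx) _).mpr (H x hx)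
end

section
/- Let Ω ⊆ ℝⁿ be open and u : Ω → ℝ^N a C² immersion solving the tangential system K_P(Du(x))·∇(K∘Du)(x) = 0 on Ω. Let U ⊆ Ω be an open connected set on which S(Du(x)ᵀDu(x)) is invertible for every x ∈ U. Then the dilation x ↦ K(Du(x)) is constant on U. -/
/-!
Since `Pᵀ · P (PᵀP)⁻¹ = I`, multiplying the tangential system by `Du(x)ᵀ` leaves
`S(DuᵀDu) ∇(K∘Du) = 0`, so the gradient of the dilation vanishes wherever `S(DuᵀDu)` is
invertible. On the connected open set `U` this forces `K∘Du` to be constant.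
-/

open Matrix

theorem eq_zero_of_dilGrad_mulVec_eq_zero {N n : ℕ} {P : Matrix (Fin N) (Fin n) ℝ}
    (hdet : 0 < (Pᵀ * P).det) (hS : IsUnit (ahl (Pᵀ * P))) {v : Fin n → ℝ}
    (hv : (dilGrad P).mulVec v = 0) : v = 0 := by
  have hscalar : 2 / (Pᵀ * P).det ^ ((1 : ℝ) / n) ≠ 0 := by positivity
  have hP : (P * (Pᵀ * P)⁻¹ * ahl (Pᵀ * P)).mulVec v = 0 := by
    rw [dilGrad, smul_mulVec] at hv
    exact (smul_eq_zero.mp hv).resolve_left hscalar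
  have hSv : (ahl (Pᵀ * P)).mulVec v = 0 := by
    have h := congrArg Pᵀ.mulVec hP
    rwa [mulVec_mulVec, ← Matrix.mul_assoc, ← Matrix.mul_assoc,
      mul_nonsing_inv _ (isUnit_iff_ne_zero.mpr hdet.ne'), Matrix.one_mul, mulVec_zero] at h
  exact mulVec_injective_iff_isUnit.mpr hS (by rw [hSv, mulVec_zero])

theorem fderiv_eq_zero_of_egrad_eq_zero {n : ℕ} {f : EuclideanSpace ℝ (Fin n) → ℝ}
    {x : EuclideanSpace ℝ (Fin n)} (h : egrad f x = 0) : fderiv ℝ f x = 0 := by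
  apply ContinuousLinearMap.coe_injective
  refine (EuclideanSpace.basisFun (Fin n) ℝ).toBasis.ext fun i => ?_
  simpa [egrad, EuclideanSpace.basisFun_apply] using congrFun h i

section EntrywiseDifferentiability

variable {E : Type*} [NormedAddCommGroup E] [NormedSpace ℝ E] {x : E}

theorem differentiableAt_det_of_entries {m : Type*} [Fintype m] [DecidableEq m]
    {M : E → Matrix m m ℝ} (h : ∀ i j, DifferentiableAt ℝ (fun y => M y i j) x) :
    DifferentiableAt ℝ (fun y => (M y).det) x := by
  simp only [det_apply, Units.smul_def]
  fun_prop

theorem differentiableAt_gram_apply_of_entries {m n : Type*} [Fintype m]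
    {M : E → Matrix m n ℝ} (h : ∀ i j, DifferentiableAt ℝ (fun y => M y i j) x) (i j : n) :
    DifferentiableAt ℝ (fun y => ((M y)ᵀ * M y) i j) x := by
  simp only [mul_apply, transpose_apply]
  fun_prop

theorem differentiableAt_dil_of_entries {N n : ℕ} {P : E → Matrix (Fin N) (Fin n) ℝ}
    (h : ∀ α i, DifferentiableAt ℝ (fun y => P y α i) x) (hdet : 0 < ((P x)ᵀ * P x).det) :
    DifferentiableAt ℝ (fun y => dil (P y)) x := by
  have hgram := differentiableAt_gram_apply_of_entries h
  have htrace : DifferentiableAt ℝ (fun y => ((P y)ᵀ * P y).trace) x := by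
    simp only [trace, diag]
    exact .fun_sum fun i _ => hgram i i
  have hroot : DifferentiableAt ℝ (fun y => ((P y)ᵀ * P y).det ^ ((1 : ℝ) / n)) x :=
    (differentiableAt_det_of_entries hgram).rpow_const (.inl hdet.ne')
  simp only [dil, div_eq_mul_inv]
  exact htrace.mul (hroot.inv (Real.rpow_pos_of_pos hdet _).ne')

end EntrywiseDifferentiability

theorem differentiableAt_jac_apply {n N : ℕ} {u : EuclideanSpace ℝ (Fin n) → (Fin N → ℝ)}
    {x : EuclideanSpace ℝ (Fin n)} (hu : ContDiffAt ℝ 2 u x) (α : Fin N) (i : Fin n) :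
    DifferentiableAt ℝ (fun y => jac u y α i) x := by
  have hDu : DifferentiableAt ℝ (fderiv ℝ u) x :=
    (hu.fderiv_right (m := 1) (by norm_num)).differentiableAt one_ne_zero
  exact differentiableAt_pi.mp (hDu.clm_apply (differentiableAt_const _)) α

theorem constant_dilation_on_invertible_phase_general (n N : ℕ)
    (Ω : Set (EuclideanSpace ℝ (Fin n)))
    (u : EuclideanSpace ℝ (Fin n) → (Fin N → ℝ))
    (hu : ContDiffOn ℝ 2 u Ω)
    (himm : ∀ x ∈ Ω, 0 < ((jac u x)ᵀ * jac u x).det)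
    (htang : ∀ x ∈ Ω, (dilGrad (jac u x)).mulVec (egrad (fun y => dil (jac u y)) x) = 0)
    (U : Set (EuclideanSpace ℝ (Fin n))) (hUΩ : U ⊆ Ω) (hUopen : IsOpen U)
    (hUconn : IsConnected U)
    (hinv : ∀ x ∈ U, IsUnit (ahl ((jac u x)ᵀ * jac u x))) :
    ∃ c : ℝ, ∀ x ∈ U, dil (jac u x) = c := by
  have hdiff : DifferentiableOn ℝ (fun y => dil (jac u y)) U := fun x hx =>
    (differentiableAt_dil_of_entries
      (differentiableAt_jac_apply ((hu.mono hUΩ).contDiffAt (hUopen.mem_nhds hx)))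
      (himm x (hUΩ hx))).differentiableWithinAt
  have hcrit : U.EqOn (fderiv ℝ fun y => dil (jac u y)) 0 := fun x hx =>
    fderiv_eq_zero_of_egrad_eq_zero
      (eq_zero_of_dilGrad_mulVec_eq_zero (himm x (hUΩ hx)) (hinv x hx) (htang x (hUΩ hx)))
  exact hUopen.exists_is_const_of_fderiv_eq_zero hUconn.isPreconnected hdiff hcrit

/-- if a `C²` immersion `u` solves the tangential system on `Ω`, and `U ⊆ Ω`
is an open connected set on which `S(DuᵀDu)` is invertible, then `K(Du)` is constant on `U`. -/
theorem constant_dilation_on_invertible_phase (n N : ℕ)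
    (Ω : Set (EuclideanSpace ℝ (Fin n))) (hΩ : IsOpen Ω)
    (u : EuclideanSpace ℝ (Fin n) → (Fin N → ℝ))
    (hu : ContDiffOn ℝ 2 u Ω)
    (himm : ∀ x ∈ Ω, 0 < ((jac u x)ᵀ * jac u x).det)
    (htang : ∀ x ∈ Ω, (dilGrad (jac u x)).mulVec (egrad (fun y => dil (jac u y)) x) = 0)
    (U : Set (EuclideanSpace ℝ (Fin n))) (hUΩ : U ⊆ Ω) (hUopen : IsOpen U)
    (hUconn : IsConnected U)
    (hinv : ∀ x ∈ U, IsUnit (ahl ((jac u x)ᵀ * jac u x))) :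
    ∃ c : ℝ, ∀ x ∈ U, dil (jac u x) = c :=
  constant_dilation_on_invertible_phase_general n N Ω u hu himm htang U hUΩ hUopen hUconn hinv
end
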